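/- Let u and v be permutations of {1,…,n} with v ≤_{LR} u in two-sided weak order. Then raj(v) ≤ raj(u), and raj(v) = raj(u) if and only if u and v have the same shape. -/

import Mathlib

open scoped Classical

noncomputable section

namespace RajRegularity

variable {n : ℕ}

/-- Maximal length of an increasing subsequence of `w(i), …, w(n)` beginning with `w(i)`:
the largest cardinality of a set `s` of positions that contains `i`, consists of positions
`≥ i`, and on which `w` is strictly increasing. -/
def lisFrom (w : Equiv.Perm (Fin n)) (i : Fin n) : ℕ :=
  (Finset.univ.filter fun s : Finset (Fin n) =>
      i ∈ s ∧ (∀ j ∈ s, i ≤ j) ∧ ∀ j ∈ s, ∀ k ∈ s, j < k → w j < w k).sup Finset.card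

/-- `rajCode w i = (n − i + 1) −` (maximal length of an increasing subsequence of
`w(i), …, w(n)` beginning with `w(i)`); here positions are 0-based, so the number of
positions `≥ i` is `n - i`. -/
def rajCode (w : Equiv.Perm (Fin n)) (i : Fin n) : ℕ :=
  (n - (i : ℕ)) - lisFrom w i

/-- The Rajchgot index `raj w = Σᵢ rajCode w i`. -/
def raj (w : Equiv.Perm (Fin n)) : ℕ := ∑ i, rajCode w i

/-- The number of inversions of `w`: pairs of positions `i < j` with `w i > w j`. -/
def invNum (w : Equiv.Perm (Fin n)) : ℕ :=
  (Finset.univ.filter fun p : Fin n × Fin n => p.1 < p.2 ∧ w p.2 < w p.1).card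

/-- The `i`-th entry of the inv code: `ℓ_i(w) = #{ j : i < j, w j < w i }`. -/
def ellCode (w : Equiv.Perm (Fin n)) (i : Fin n) : ℕ :=
  (Finset.univ.filter fun j : Fin n => i < j ∧ w j < w i).card

/-- The set of descent positions of `w` (0-based position `j` with `w j > w (j+1)`). -/
def descents (w : Equiv.Perm (Fin n)) : Finset (Fin n) :=
  Finset.univ.filter fun j : Fin n =>
    if h : (j : ℕ) + 1 < n then w ⟨(j : ℕ) + 1, h⟩ < w j else False

/-- The major index: the sum of the (1-based) descent positions of `w`. -/
def maj (w : Equiv.Perm (Fin n)) : ℕ := ∑ j ∈ descents w, ((j : ℕ) + 1)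

/-- `mCode w i`: the number of descents of `w` at positions `≥ i`. -/
def mCode (w : Equiv.Perm (Fin n)) (i : Fin n) : ℕ :=
  ((descents w).filter fun j => i ≤ j).card

/-- `w` is dominant iff it avoids the pattern 132. -/
def Dominant (w : Equiv.Perm (Fin n)) : Prop :=
  ¬ ∃ i j k : Fin n, i < j ∧ j < k ∧ w i < w k ∧ w k < w j

/-- `w` is fireworks iff there are no positions `i < j` with `w j < w (j+1) < w i`. -/
def Fireworks (w : Equiv.Perm (Fin n)) : Prop :=
  ¬ ∃ (i j : Fin n) (h : (j : ℕ) + 1 < n),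
      i < j ∧ w j < w ⟨(j : ℕ) + 1, h⟩ ∧ w ⟨(j : ℕ) + 1, h⟩ < w i

/-- `w` is inverse fireworks iff `w⁻¹` is fireworks. -/
def InvFireworks (w : Equiv.Perm (Fin n)) : Prop := Fireworks w⁻¹

/-- `w` is a valley permutation: for some `a`, it is strictly decreasing on positions `≤ a`
and strictly increasing on positions `≥ a`. -/
def Valley (w : Equiv.Perm (Fin n)) : Prop :=
  ∃ a : ℕ, (∀ i j : Fin n, i < j → (j : ℕ) ≤ a → w j < w i) ∧
    ∀ i j : Fin n, a ≤ (i : ℕ) → i < j → w i < w j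

/-- `eps w i` is the (1-based) blob index `ε_i(w) = i + r_i(w)`. -/
def eps (w : Equiv.Perm (Fin n)) (i : Fin n) : ℕ := (i : ℕ) + 1 + rajCode w i

/-- The shape of `w`: `α_k(w) = #{ i : ε_i(w) = k }` (here `k : Fin n` stands for the
1-based index `k + 1`). -/
def shape (w : Equiv.Perm (Fin n)) : Fin n → ℕ := fun k =>
  (Finset.univ.filter fun i : Fin n => eps w i = (k : ℕ) + 1).card

/-- Dominance order on shapes: `α ⪰ β` iff every tail sum of `α` is at least the
corresponding tail sum of `β`. -/
def Dominates (α β : Fin n → ℕ) : Prop :=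
  ∀ m : Fin n,
    ∑ k ∈ Finset.univ.filter (fun k : Fin n => m ≤ k), β k ≤
      ∑ k ∈ Finset.univ.filter (fun k : Fin n => m ≤ k), α k

/-- Right weak order: `u ≤_R w` iff `w = u * v` length-additively. -/
def leR (u w : Equiv.Perm (Fin n)) : Prop :=
  ∃ v : Equiv.Perm (Fin n), w = u * v ∧ invNum w = invNum u + invNum v

/-- Left weak order: `u ≤_L w` iff `w = v * u` length-additively. -/
def leL (u w : Equiv.Perm (Fin n)) : Prop :=
  ∃ v : Equiv.Perm (Fin n), w = v * u ∧ invNum w = invNum v + invNum u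

/-- Two-sided weak order: the transitive closure of the union of left and right weak
orders (both are reflexive, so we may use the reflexive-transitive closure). -/
def leLR (u w : Equiv.Perm (Fin n)) : Prop :=
  Relation.ReflTransGen (fun a b : Equiv.Perm (Fin n) => leL a b ∨ leR a b) u w

/-- The maximum of the block of the set partition `π(w)` containing the value `v`;
the block of `v` is `{ v' : ε_{w⁻¹ v'}(w) = ε_{w⁻¹ v}(w) }`. -/
def blockMax (w : Equiv.Perm (Fin n)) (v : Fin n) : ℕ :=
  ((Finset.univ.filter fun v' : Fin n => eps w (w⁻¹ v') = eps w (w⁻¹ v)).max'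
      ⟨v, Finset.mem_filter.mpr ⟨Finset.mem_univ v, rfl⟩⟩).val

/-- The fireworks map `Φ`: the one-line word of `Φ w` lists the blocks of `π(w)` in
increasing order of their maxima, each block written in decreasing order.  Equivalently,
`Φ w` sorts the values by the key (max of block, value reversed), lexicographically. -/
def Phi (w : Equiv.Perm (Fin n)) : Equiv.Perm (Fin n) :=
  Tuple.sort fun v : Fin n => n * blockMax w v + (n - 1 - (v : ℕ))

/-- The inverse fireworks map `Φ_inv w = Φ(w⁻¹)⁻¹`. -/
def PhiInv (w : Equiv.Perm (Fin n)) : Equiv.Perm (Fin n) := (Phi w⁻¹)⁻¹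

/-- Partial sums of a sequence of block sizes. -/
def psum (a : ℕ → ℕ) (m : ℕ) : ℕ := ∑ j ∈ Finset.range m, a j

/-- The index of the block (interval `[psum a m, psum a (m+1))`) containing the value `v`. -/
def blockIdx (n : ℕ) (a : ℕ → ℕ) (v : Fin n) : ℕ :=
  ((Finset.range n).filter fun m => psum a (m + 1) ≤ (v : ℕ)).card

/-- The layered permutation with block sizes `a 0, a 1, …`: it reverses each of the
consecutive intervals `[psum a m, psum a (m+1))` of `{0, …, n-1}`.  Equivalently, its
one-line word sorts the values by (block index, value reversed) lexicographically. -/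
def layered (n : ℕ) (a : ℕ → ℕ) : Equiv.Perm (Fin n) :=
  Tuple.sort fun v : Fin n => n * blockIdx n a v + (n - 1 - (v : ℕ))

/-- The layered permutation `e_α` associated to a shape `α : Fin n → ℕ`. -/
def eOf (α : Fin n → ℕ) : Equiv.Perm (Fin n) :=
  layered n fun m => if h : m < n then α ⟨m, h⟩ else 0


/-!
Since `lisFrom w i ≤ n - i`, the blob index is `ε_i(w) = n + 1 - lisFrom w i`. If `v ≤_L u`, every
non-inversion of `u` (a pair of positions) is one of `v`; if `v ≤_R u`, the same holds for pairs of
values. In both cases an increasing subsequence of `u` starting at position `i` is carried to one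
of `v` starting at `σ i`, for a permutation `σ` of the positions. Composing along the chain, `ε(v) ∘ σ ≤ ε(u)`
pointwise for some `σ`; summing gives `raj v ≤ raj u`, and equality forces `ε(v) ∘ σ = ε(u)`, hence
equal shapes. Conversely `raj w = Σ_k k α_k(w) - Σ_i i` depends only on the shape.
-/

lemma le_lisFrom (w : Equiv.Perm (Fin n)) (i : Fin n) (s : Finset (Fin n))
    (hi : i ∈ s) (hmin : ∀ j ∈ s, i ≤ j)
    (hinc : ∀ j ∈ s, ∀ k ∈ s, j < k → w j < w k) : s.card ≤ lisFrom w i :=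
  Finset.le_sup (f := Finset.card) (Finset.mem_filter.2 ⟨Finset.mem_univ s, hi, hmin, hinc⟩)

lemma lisFrom_le (w : Equiv.Perm (Fin n)) (i : Fin n) {m : ℕ}
    (H : ∀ s : Finset (Fin n), i ∈ s → (∀ j ∈ s, i ≤ j) →
      (∀ j ∈ s, ∀ k ∈ s, j < k → w j < w k) → s.card ≤ m) : lisFrom w i ≤ m :=
  Finset.sup_le fun s hs => by
    rw [Finset.mem_filter] at hs
    exact H s hs.2.1 hs.2.2.1 hs.2.2.2

lemma one_le_lisFrom (w : Equiv.Perm (Fin n)) (i : Fin n) : 1 ≤ lisFrom w i := by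
  simpa using le_lisFrom w i {i} (by simp) (by simp) (by simp)

lemma lisFrom_le_sub (w : Equiv.Perm (Fin n)) (i : Fin n) : lisFrom w i ≤ n - (i : ℕ) :=
  lisFrom_le w i fun _ _ hmin _ =>
    (Finset.card_le_card fun j hj => Finset.mem_Ici.2 (hmin j hj)).trans_eq (Fin.card_Ici i)

lemma eps_eq (w : Equiv.Perm (Fin n)) (i : Fin n) : eps w i = n + 1 - lisFrom w i := by
  have := lisFrom_le_sub w i
  have := i.is_lt
  unfold eps rajCode
  omega

lemma eps_le_eps_of_lisFrom_le {u v : Equiv.Perm (Fin n)} {i j : Fin n}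
    (h : lisFrom u i ≤ lisFrom v j) : eps v j ≤ eps u i := by
  rw [eps_eq, eps_eq]
  omega

lemma sum_eps (w : Equiv.Perm (Fin n)) :
    ∑ i, eps w i = raj w + ∑ i : Fin n, ((i : ℕ) + 1) := by
  rw [raj, ← Finset.sum_add_distrib]
  exact Finset.sum_congr rfl fun i _ => by unfold eps; ring

lemma sum_eps_eq_sum_shape (w : Equiv.Perm (Fin n)) :
    ∑ i, eps w i = ∑ k : Fin n, ((k : ℕ) + 1) * shape w k := by
  have hbound : ∀ i, eps w i - 1 < n := fun i => by
    have := one_le_lisFrom w i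
    have := i.is_lt
    rw [eps_eq]
    omega
  let blob : Fin n → Fin n := fun i => ⟨eps w i - 1, hbound i⟩
  rw [← Finset.sum_fiberwise_of_maps_to (g := blob) (fun i _ => Finset.mem_univ (blob i))]
  refine Finset.sum_congr rfl fun k _ => ?_
  have hfiber : (Finset.univ.filter fun i => blob i = k) =
      Finset.univ.filter fun i => eps w i = (k : ℕ) + 1 := by
    ext i
    have : 1 ≤ eps w i := by unfold eps; omega
    simp only [Finset.mem_filter, Finset.mem_univ, true_and, blob, Fin.ext_iff]
    omega
  rw [hfiber, Finset.sum_congr rfl fun i hi => (Finset.mem_filter.1 hi).2, Finset.sum_const,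
    smul_eq_mul, mul_comm, shape]

lemma raj_eq_of_shape_eq {u v : Equiv.Perm (Fin n)} (h : shape u = shape v) :
    raj u = raj v := by
  have hu := sum_eps u
  have hv := sum_eps v
  rw [sum_eps_eq_sum_shape, h, ← sum_eps_eq_sum_shape] at hu
  omega

lemma shape_eq_of_eps_comp {u v : Equiv.Perm (Fin n)} (σ : Equiv.Perm (Fin n))
    (h : ∀ i, eps u (σ i) = eps v i) : shape u = shape v :=
  funext fun _ => (Finset.card_equiv σ fun i => by simp [h]).symm

def invSet (w : Equiv.Perm (Fin n)) : Finset (Fin n × Fin n) :=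
  Finset.univ.filter fun p => p.1 < p.2 ∧ w p.2 < w p.1

lemma mem_invSet {w : Equiv.Perm (Fin n)} {p : Fin n × Fin n} :
    p ∈ invSet w ↔ p.1 < p.2 ∧ w p.2 < w p.1 := by
  simp [invSet]

lemma card_invSet (w : Equiv.Perm (Fin n)) : (invSet w).card = invNum w := rfl

lemma invNum_inv (w : Equiv.Perm (Fin n)) : invNum w⁻¹ = invNum w := by
  rw [← card_invSet, ← card_invSet]
  refine Finset.card_nbij' (fun p => (w⁻¹ p.2, w⁻¹ p.1)) (fun q => (w q.2, w q.1))
    (fun p hp => ?_) (fun q hq => ?_) (fun _ _ => by simp) (fun _ _ => by simp)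
  · rw [Finset.mem_coe, mem_invSet] at hp ⊢
    exact ⟨hp.2, by simpa using hp.1⟩
  · rw [Finset.mem_coe, mem_invSet] at hq ⊢
    exact ⟨hq.2, by simpa using hq.1⟩

/-- Otherwise the inversions of `a * b` inject into those of `a` together with those of `b`
other than `(i, j)`. -/
lemma lt_of_invNum_mul_eq_add {a b : Equiv.Perm (Fin n)}
    (h : invNum (a * b) = invNum a + invNum b) {i j : Fin n} (hij : i < j)
    (hab : (a * b) i < (a * b) j) : b i < b j := by
  by_contra hba
  have hba : b j < b i := lt_of_le_of_ne (not_lt.1 hba) (b.injective.ne hij.ne')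
  have hmem : (i, j) ∈ invSet b := mem_invSet.2 ⟨hij, hba⟩
  have hsub : invSet (a * b) ⊆
      (invSet b).erase (i, j) ∪ (invSet a).image fun q => (b⁻¹ q.1, b⁻¹ q.2) := by
    intro p hp
    rw [mem_invSet, Equiv.Perm.mul_apply, Equiv.Perm.mul_apply] at hp
    rcases lt_or_gt_of_ne (b.injective.ne hp.1.ne') with hb | hb
    · refine Finset.mem_union_left _ (Finset.mem_erase.2 ⟨?_, mem_invSet.2 ⟨hp.1, hb⟩⟩)
      rintro rfl
      exact absurd hab (not_lt.2 hp.2.le)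
    · refine Finset.mem_union_right _ (Finset.mem_image.2 ⟨(b p.1, b p.2), ?_, by simp⟩)
      exact mem_invSet.2 ⟨hb, hp.2⟩
  have hcard := (Finset.card_le_card hsub).trans ((Finset.card_union_le _ _).trans
    (Nat.add_le_add_left Finset.card_image_le _))
  rw [Finset.card_erase_of_mem hmem, card_invSet, card_invSet, card_invSet] at hcard
  have := Finset.card_pos.2 ⟨_, hmem⟩
  rw [card_invSet] at this
  omega

lemma lt_of_leL {u v : Equiv.Perm (Fin n)} (h : leL v u) {i j : Fin n} (hij : i < j)
    (hu : u i < u j) : v i < v j := by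
  obtain ⟨c, rfl, hc⟩ := h
  exact lt_of_invNum_mul_eq_add hc hij hu

lemma leL_inv_of_leR {u v : Equiv.Perm (Fin n)} (h : leR v u) : leL v⁻¹ u⁻¹ := by
  obtain ⟨c, rfl, hc⟩ := h
  exact ⟨c⁻¹, mul_inv_rev v c, by rw [invNum_inv, invNum_inv, invNum_inv, hc, add_comm]⟩

lemma lisFrom_le_lisFrom_comp {u w : Equiv.Perm (Fin n)} (σ : Equiv.Perm (Fin n))
    (h : ∀ i j, i < j → u i < u j → σ i < σ j ∧ w (σ i) < w (σ j)) (i : Fin n) :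
    lisFrom u i ≤ lisFrom w (σ i) := by
  refine lisFrom_le u i fun s hi hmin hinc => ?_
  rw [← Finset.card_image_of_injective s σ.injective]
  refine le_lisFrom w (σ i) _ (Finset.mem_image_of_mem σ hi) ?_ ?_
  · simp only [Finset.mem_image, forall_exists_index, and_imp]
    rintro _ j hj rfl
    rcases (hmin j hj).eq_or_lt with rfl | hij
    · rfl
    · exact (h i j hij (hinc i hi j hj hij)).1.le
  · simp only [Finset.mem_image, forall_exists_index, and_imp]
    rintro _ j hj rfl _ l hl rfl hjl
    rcases lt_trichotomy j l with hlt | rfl | hgt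
    · exact (h j l hlt (hinc j hj l hl hlt)).2
    · exact absurd hjl (lt_irrefl _)
    · exact absurd hjl (h l j hgt (hinc l hl j hj hgt)).1.asymm

lemma lisFrom_le_of_leL {u v : Equiv.Perm (Fin n)} (h : leL v u) (i : Fin n) :
    lisFrom u i ≤ lisFrom v i :=
  lisFrom_le_lisFrom_comp 1 (fun _ _ hij hu => ⟨hij, lt_of_leL h hij hu⟩) i

lemma lisFrom_le_of_leR {u v : Equiv.Perm (Fin n)} (h : leR v u) (i : Fin n) :
    lisFrom u i ≤ lisFrom v ((v⁻¹ * u) i) := by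
  refine lisFrom_le_lisFrom_comp (v⁻¹ * u) (fun i j hij hu => ⟨?_, by simpa using hu⟩) i
  exact lt_of_leL (leL_inv_of_leR h) hu (by simpa using hij)

lemma exists_lisFrom_le_comp_of_leLR {u v : Equiv.Perm (Fin n)} (h : leLR v u) :
    ∃ σ : Equiv.Perm (Fin n), ∀ i, lisFrom u i ≤ lisFrom v (σ i) := by
  induction h with
  | refl => exact ⟨1, fun _ => le_rfl⟩
  | tail _ hstep ih =>
    obtain ⟨σ, hσ⟩ := ih
    obtain ⟨τ, hτ⟩ : ∃ τ : Equiv.Perm (Fin n), ∀ i, lisFrom _ i ≤ lisFrom _ (τ i) :=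
      hstep.elim (fun hL => ⟨1, lisFrom_le_of_leL hL⟩) (fun hR => ⟨_, lisFrom_le_of_leR hR⟩)
    exact ⟨σ * τ, fun i => (hτ i).trans (hσ (τ i))⟩

/-- If `v ≤_{LR} u` in two-sided weak order then `raj(v) ≤ raj(u)`, with
equality iff `u` and `v` have the same shape. -/
theorem raj_mono_leLR (n : ℕ) (u v : Equiv.Perm (Fin n)) (h : leLR v u) :
    raj v ≤ raj u ∧ (raj v = raj u ↔ shape v = shape u) := by
  obtain ⟨σ, hσ⟩ := exists_lisFrom_le_comp_of_leLR h
  have heps : ∀ i, eps v (σ i) ≤ eps u i := fun i => eps_le_eps_of_lisFrom_le (hσ i)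
  have hsum : ∑ i, eps v (σ i) ≤ ∑ i, eps u i := Finset.sum_le_sum fun i _ => heps i
  rw [Equiv.sum_comp σ (eps v), sum_eps, sum_eps] at hsum
  refine ⟨by omega, fun hraj => ?_, raj_eq_of_shape_eq⟩
  have hsum_eq : ∑ i, eps v (σ i) = ∑ i, eps u i := by
    rw [Equiv.sum_comp σ (eps v), sum_eps, sum_eps, hraj]
  exact shape_eq_of_eps_comp σ fun i =>
    (Finset.sum_eq_sum_iff_of_le fun i _ => heps i).1 hsum_eq i (Finset.mem_univ i)

end RajRegularity
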